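/- Let n > 4 be odd and let F be an almost bent (n,n)-function with F(0) = 0, i.e. W_F(μ,ν) ∈ {0, 2^{(n+1)/2}, −2^{(n+1)/2}} for every μ ∈ 𝔽₂ⁿ∖{0} and every ν ∈ 𝔽₂ⁿ. Then C_F is a minimal linear code of length 2ⁿ−1 and dimension 2n, its minimum nonzero Hamming weight equals 2^{n−1} − 2^{(n−1)/2}, and over the pairs (μ,ν) ∈ 𝔽₂ⁿ × 𝔽₂ⁿ: |{(μ,ν) : wt(c(μ,ν)) = 2^{n−1}}| = (2ⁿ−1) + (2ⁿ−1)·2^{n−1}, |{(μ,ν) : wt(c(μ,ν)) = 2^{n−1} + 2^{(n−1)/2}}| = (2ⁿ−1)(2^{n−2} − 2^{(n−3)/2}), and |{(μ,ν) : wt(c(μ,ν)) = 2^{n−1} − 2^{(n−1)/2}}| = (2ⁿ−1)(2^{n−2} + 2^{(n−3)/2}). -/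
import Mathlib


def dotp {n : ℕ} (v x : Fin n → ZMod 2) : ZMod 2 := ∑ i, v i * x i

def wht {n : ℕ} (f : (Fin n → ZMod 2) → ZMod 2) (ν : Fin n → ZMod 2) : ℤ :=
  ∑ x : Fin n → ZMod 2, (-1 : ℤ) ^ (f x + dotp ν x).val

def whtF {n m : ℕ} (F : (Fin n → ZMod 2) → (Fin m → ZMod 2))
    (μ : Fin m → ZMod 2) (ν : Fin n → ZMod 2) : ℤ :=
  wht (fun x => dotp μ (F x)) ν

def cw {n m : ℕ} (F : (Fin n → ZMod 2) → (Fin m → ZMod 2))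
    (μ : Fin m → ZMod 2) (ν : Fin n → ZMod 2) :
    {x : Fin n → ZMod 2 // x ≠ 0} → ZMod 2 :=
  fun x => dotp μ (F x.1) + dotp ν x.1

def codeF {n m : ℕ} (F : (Fin n → ZMod 2) → (Fin m → ZMod 2)) :
    Set ({x : Fin n → ZMod 2 // x ≠ 0} → ZMod 2) :=
  Set.range fun p : (Fin m → ZMod 2) × (Fin n → ZMod 2) => cw F p.1 p.2

def wt {n : ℕ} (c : {x : Fin n → ZMod 2 // x ≠ 0} → ZMod 2) : ℕ :=
  (Finset.univ.filter fun x => c x = 1).card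

def IsMinimal {n : ℕ} (C : Set ({x : Fin n → ZMod 2 // x ≠ 0} → ZMod 2)) : Prop :=
  ∀ c ∈ C, ∀ c' ∈ C, c ≠ 0 → c' ≠ 0 →
    {x | c' x = 1} ⊆ {x | c x = 1} → c' = c

def weights {n m : ℕ} (F : (Fin n → ZMod 2) → (Fin m → ZMod 2)) : Set ℕ :=
  {w | ∃ c ∈ codeF F, c ≠ 0 ∧ wt c = w}

-- chi
def chi (a : ZMod 2) : ℤ := (-1) ^ a.val

lemma chi_add : ∀ a b : ZMod 2, chi (a + b) = chi a * chi b := by decide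
lemma chi_zero : chi 0 = 1 := rfl
lemma chi_one : chi 1 = -1 := rfl
lemma chi_eq : ∀ a : ZMod 2, chi a = 1 - 2 * a.val := by decide
lemma chi_sq : ∀ a : ZMod 2, chi a * chi a = 1 := by decide
lemma zmod2_ne_zero : ∀ a : ZMod 2, a ≠ 0 → a = 1 := by decide
lemma zmod2_add_eq_zero : ∀ a b : ZMod 2, a + b = 0 → b = a := by decide
lemma zmod2_add_self : ∀ a : ZMod 2, a + a = 0 := by decide

lemma dotp_comm {n : ℕ} (v x : Fin n → ZMod 2) : dotp v x = dotp x v := by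
  unfold dotp; exact Finset.sum_congr rfl fun i _ => mul_comm _ _

lemma dotp_zero_right {n : ℕ} (v : Fin n → ZMod 2) : dotp v 0 = 0 := by
  unfold dotp; simp

lemma dotp_zero_left {n : ℕ} (v : Fin n → ZMod 2) : dotp 0 v = 0 := by
  unfold dotp; simp

lemma dotp_add_left {n : ℕ} (v w x : Fin n → ZMod 2) :
    dotp (v + w) x = dotp v x + dotp w x := by
  unfold dotp; rw [← Finset.sum_add_distrib]
  exact Finset.sum_congr rfl fun i _ => by simp [add_mul]

lemma dotp_add_right {n : ℕ} (v x y : Fin n → ZMod 2) :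
    dotp v (x + y) = dotp v x + dotp v y := by
  rw [dotp_comm, dotp_add_left, dotp_comm x v, dotp_comm y v]

lemma exists_dotp_one {n : ℕ} {x : Fin n → ZMod 2} (hx : x ≠ 0) :
    ∃ ν : Fin n → ZMod 2, dotp ν x = 1 := by
  obtain ⟨i, hi⟩ := Function.ne_iff.mp hx
  refine ⟨fun j => if j = i then 1 else 0, ?_⟩
  unfold dotp
  rw [Finset.sum_eq_single i]
  · show (if i = i then (1:ZMod 2) else 0) * x i = 1
    rw [if_pos rfl, one_mul]; exact zmod2_ne_zero _ (by simpa using hi)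
  · intro b _ hb; simp [hb]
  · simp

lemma dotp_eq_zero_forall {n : ℕ} {x : Fin n → ZMod 2}
    (h : ∀ ν, dotp ν x = 0) : x = 0 := by
  by_contra hx
  obtain ⟨ν, hν⟩ := exists_dotp_one hx
  rw [h ν] at hν; exact zero_ne_one hν

lemma sum_chi_dotp {n : ℕ} (x : Fin n → ZMod 2) :
    ∑ ν : Fin n → ZMod 2, chi (dotp ν x) = if x = 0 then (2 : ℤ) ^ n else 0 := by
  by_cases hx : x = 0
  · simp [hx, dotp_zero_right, chi_zero, Finset.card_univ]
  · simp only [hx, if_false]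
    obtain ⟨ν₀, hν₀⟩ := exists_dotp_one hx
    have key : ∑ ν : Fin n → ZMod 2, chi (dotp ν x)
        = ∑ ν : Fin n → ZMod 2, chi (dotp (ν + ν₀) x) :=
      (Fintype.sum_equiv (Equiv.addRight ν₀) _ _ (fun ν => rfl)).symm
    have : ∑ ν : Fin n → ZMod 2, chi (dotp ν x)
        = - ∑ ν : Fin n → ZMod 2, chi (dotp ν x) := by
      nth_rewrite 1 [key]
      rw [← Finset.sum_neg_distrib]
      refine Finset.sum_congr rfl fun ν _ => ?_
      rw [dotp_add_left, chi_add, hν₀, chi_one]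
      ring
    linarith

lemma wht_eq_sum_chi {n : ℕ} (f : (Fin n → ZMod 2) → ZMod 2) (ν : Fin n → ZMod 2) :
    wht f ν = ∑ x : Fin n → ZMod 2, chi (f x) * chi (dotp ν x) := by
  unfold wht
  exact Finset.sum_congr rfl fun x _ => (chi_add _ _)

lemma sum_wht {n : ℕ} (g : (Fin n → ZMod 2) → ZMod 2) :
    ∑ ν : Fin n → ZMod 2, wht g ν = 2 ^ n * chi (g 0) := by
  simp only [wht_eq_sum_chi]
  rw [Finset.sum_comm]
  have : ∀ x : Fin n → ZMod 2,
      ∑ ν : Fin n → ZMod 2, chi (g x) * chi (dotp ν x)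
        = chi (g x) * (if x = 0 then (2:ℤ)^n else 0) := by
    intro x; rw [← Finset.mul_sum, sum_chi_dotp]
  rw [Finset.sum_congr rfl fun x _ => this x]
  simp only [mul_ite, mul_zero]
  rw [Finset.sum_ite_eq' Finset.univ 0 (fun x => chi (g x) * (2:ℤ)^n)]
  simp [mul_comm]

lemma sum_wht_sq {n : ℕ} (g : (Fin n → ZMod 2) → ZMod 2) :
    ∑ ν : Fin n → ZMod 2, (wht g ν) ^ 2 = 2 ^ (2 * n) := by
  have expand : ∀ ν : Fin n → ZMod 2, (wht g ν) ^ 2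
      = ∑ x : Fin n → ZMod 2, ∑ y : Fin n → ZMod 2,
          chi (g x) * chi (g y) * chi (dotp ν (x + y)) := by
    intro ν
    rw [sq, wht_eq_sum_chi, Finset.sum_mul_sum]
    refine Finset.sum_congr rfl fun x _ => Finset.sum_congr rfl fun y _ => ?_
    rw [dotp_add_right, chi_add]; ring
  simp only [expand]
  rw [Finset.sum_comm]
  have swap2 : ∀ x : Fin n → ZMod 2,
      ∑ ν : Fin n → ZMod 2, ∑ y : Fin n → ZMod 2,
          chi (g x) * chi (g y) * chi (dotp ν (x + y))
      = ∑ y : Fin n → ZMod 2, chi (g x) * chi (g y) *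
          (if x + y = 0 then (2:ℤ)^n else 0) := by
    intro x
    rw [Finset.sum_comm]
    refine Finset.sum_congr rfl fun y _ => ?_
    rw [← Finset.mul_sum, sum_chi_dotp]
  rw [Finset.sum_congr rfl fun x _ => swap2 x]
  have inner : ∀ x : Fin n → ZMod 2,
      ∑ y : Fin n → ZMod 2, chi (g x) * chi (g y) *
          (if x + y = 0 then (2:ℤ)^n else 0) = 2 ^ n := by
    intro x
    have hxy : ∀ y : Fin n → ZMod 2, x + y = 0 ↔ y = x := by
      intro y
      constructor
      · intro h; funext i
        exact zmod2_add_eq_zero _ _ (by simpa using congrFun h i)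
      · intro h; rw [h]; funext i; simpa using zmod2_add_self (x i)
    have : ∀ y : Fin n → ZMod 2, chi (g x) * chi (g y) *
          (if x + y = 0 then (2:ℤ)^n else 0)
        = if y = x then chi (g x) * chi (g y) * (2:ℤ)^n else 0 := by
      intro y
      by_cases h : y = x
      · simp [h, hxy]
      · rw [if_neg (fun hh => h ((hxy y).mp hh)), if_neg h, mul_zero]
    rw [Finset.sum_congr rfl fun y _ => this y,
        Finset.sum_ite_eq' Finset.univ x (fun y => chi (g x) * chi (g y) * (2:ℤ)^n)]
    simp [chi_sq]
  rw [Finset.sum_congr rfl fun x _ => inner x]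
  simp [Finset.card_univ, two_mul, pow_add]

lemma wt_relation {n m : ℕ} (F : (Fin n → ZMod 2) → (Fin m → ZMod 2))
    (h0 : F 0 = 0) (μ : Fin m → ZMod 2) (ν : Fin n → ZMod 2) :
    2 * (wt (cw F μ ν) : ℤ) = 2 ^ n - whtF F μ ν := by
  have g0 : dotp μ (F 0) + dotp ν 0 = 0 := by
    rw [h0, dotp_zero_right, dotp_zero_right, add_zero]
  have hcard : wt (cw F μ ν)
      = (Finset.univ.filter fun x : Fin n → ZMod 2
          => dotp μ (F x) + dotp ν x = 1).card := by
    unfold wt cw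
    refine Finset.card_bij (fun x _ => x.1) ?_ ?_ ?_
    · intro a ha; simp only [Finset.mem_filter, Finset.mem_univ, true_and] at ha ⊢
      exact ha
    · intro a _ b _ h; exact Subtype.ext h
    · intro x hx
      simp only [Finset.mem_filter, Finset.mem_univ, true_and] at hx
      have hx0 : x ≠ 0 := by
        rintro rfl; rw [g0] at hx; exact zero_ne_one hx
      exact ⟨⟨x, hx0⟩, by simpa using hx, rfl⟩
  have : whtF F μ ν = ∑ x : Fin n → ZMod 2,
      (1 - 2 * ((dotp μ (F x) + dotp ν x).val : ℤ)) := by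
    unfold whtF wht
    exact Finset.sum_congr rfl fun x _ => chi_eq _
  rw [this, Finset.sum_sub_distrib]
  have hval : ∀ a : ZMod 2, (a.val : ℤ) = if a = 1 then 1 else 0 := by decide
  have : ∑ x : Fin n → ZMod 2, 2 * ((dotp μ (F x) + dotp ν x).val : ℤ)
      = 2 * (wt (cw F μ ν) : ℤ) := by
    rw [← Finset.mul_sum, hcard]
    congr 1
    rw [Finset.sum_congr rfl fun x _ => hval _]
    rw [Finset.sum_ite, Finset.sum_const, Finset.sum_const]
    simp
  rw [this]
  simp [Finset.card_univ]

lemma cw_add {n m : ℕ} (F : (Fin n → ZMod 2) → (Fin m → ZMod 2))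
    (μ μ' : Fin m → ZMod 2) (ν ν' : Fin n → ZMod 2) :
    cw F μ ν + cw F μ' ν' = cw F (μ + μ') (ν + ν') := by
  funext x
  simp only [Pi.add_apply, cw, dotp_add_left]
  ring

lemma whtF_of_cw_zero {n m : ℕ} (F : (Fin n → ZMod 2) → (Fin m → ZMod 2))
    (h0 : F 0 = 0) {μ : Fin m → ZMod 2} {ν : Fin n → ZMod 2}
    (h : cw F μ ν = 0) : whtF F μ ν = 2 ^ n := by
  have hz : ∀ x : Fin n → ZMod 2, dotp μ (F x) + dotp ν x = 0 := by
    intro x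
    by_cases hx : x = 0
    · subst hx; rw [h0, dotp_zero_right, dotp_zero_right, add_zero]
    · exact congrFun h ⟨x, hx⟩
  unfold whtF wht
  rw [Finset.sum_congr rfl fun x _ => by rw [hz x]]
  simp [Finset.card_univ]

lemma counts {n k : ℕ} (hnk : n = 2 * k + 1) (hk2 : 2 ≤ k)
    (F : (Fin n → ZMod 2) → (Fin n → ZMod 2)) (h0 : F 0 = 0)
    (μ : Fin n → ZMod 2)
    (htri : ∀ ν, whtF F μ ν = 0 ∨ whtF F μ ν = 2 ^ (k+1) ∨ whtF F μ ν = -2 ^ (k+1)) :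
    (Finset.univ.filter fun ν => whtF F μ ν = (2:ℤ) ^ (k+1)).card
        = 2 ^ (2*k-1) + 2 ^ (k-1) ∧
    (Finset.univ.filter fun ν => whtF F μ ν = -(2:ℤ) ^ (k+1)).card
        = 2 ^ (2*k-1) - 2 ^ (k-1) ∧
    (Finset.univ.filter fun ν => whtF F μ ν = 0).card = 2 ^ (2*k) := by
  set W := whtF F μ with hW
  set s : ℤ := 2 ^ (k+1) with hs
  have hs0 : (0:ℤ) < s := by positivity
  have hsne : s ≠ 0 := hs0.ne'
  have hsns : -s ≠ s := by linarith
  have hnsne : -s ≠ 0 := by linarith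
  set a := (Finset.univ.filter fun ν => W ν = s).card with ha
  set b := (Finset.univ.filter fun ν => W ν = -s).card with hb
  set z := (Finset.univ.filter fun ν => W ν = 0).card with hz
  have hg0 : dotp μ (F 0) = 0 := by rw [h0, dotp_zero_right]
  have hsum : ∑ ν : Fin n → ZMod 2, W ν = 2 ^ n := by
    have := sum_wht (fun x => dotp μ (F x))
    rw [hg0, chi_zero, mul_one] at this
    exact this
  have hsum2 : ∑ ν : Fin n → ZMod 2, (W ν) ^ 2 = 2 ^ (2 * n) :=
    sum_wht_sq (fun x => dotp μ (F x))
  have hQimp : ∀ ν : Fin n → ZMod 2, W ν = -s → ¬ W ν = s := by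
    intro ν h hc; rw [hc] at h; exact hsns h.symm
  have filterb : ((Finset.univ.filter fun ν => ¬ W ν = s).filter fun ν => W ν = -s)
      = Finset.univ.filter fun ν => W ν = -s := by
    rw [Finset.filter_filter]
    exact Finset.filter_congr fun ν _ => by
      constructor
      · exact fun h => h.2
      · exact fun h => ⟨hQimp ν h, h⟩
  have key1 : ∑ ν : Fin n → ZMod 2, W ν = s * a - s * b := by
    have step : ∀ ν : Fin n → ZMod 2,
        W ν = (if W ν = s then s else if W ν = -s then -s else 0) := by
      intro ν
      rcases htri ν with h | h | h
      · rw [hW] at h ⊢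
        rw [h, if_neg hsne.symm, if_neg hnsne.symm]
      · rw [hW] at h ⊢; rw [h, if_pos rfl]
      · rw [hW] at h ⊢
        rw [h, if_neg (by simpa using hsns), if_pos rfl]
    rw [Finset.sum_congr rfl fun ν _ => step ν, Finset.sum_ite, Finset.sum_ite,
        Finset.sum_const, Finset.sum_const, Finset.sum_const, filterb]
    simp only [nsmul_eq_mul, smul_zero, add_zero]
    push_cast
    ring
  have key2 : ∑ ν : Fin n → ZMod 2, (W ν) ^ 2 = s ^ 2 * a + s ^ 2 * b := by
    have step : ∀ ν : Fin n → ZMod 2,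
        (W ν) ^ 2 = (if W ν = s then s ^ 2 else if W ν = -s then s ^ 2 else 0) := by
      intro ν
      rcases htri ν with h | h | h
      · rw [hW] at h ⊢
        rw [h, if_neg hsne.symm, if_neg hnsne.symm]; ring
      · rw [hW] at h ⊢; rw [h, if_pos rfl]
      · rw [hW] at h ⊢
        rw [h, if_neg (by simpa using hsns), if_pos rfl]; ring
    rw [Finset.sum_congr rfl fun ν _ => step ν, Finset.sum_ite, Finset.sum_ite,
        Finset.sum_const, Finset.sum_const, Finset.sum_const, filterb]
    simp only [nsmul_eq_mul, smul_zero, add_zero]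
    push_cast
    ring
  have keyz : a + b + z = 2 ^ n := by
    have h1 : a + (Finset.univ.filter fun ν => ¬ W ν = s).card
        = (Finset.univ : Finset (Fin n → ZMod 2)).card :=
      Finset.card_filter_add_card_filter_not _
    have h2 : b + ((Finset.univ.filter fun ν => ¬ W ν = s).filter
          fun ν => ¬ W ν = -s).card
        = (Finset.univ.filter fun ν => ¬ W ν = s).card := by
      have h2' := Finset.card_filter_add_card_filter_not
        (s := Finset.univ.filter fun ν => ¬ W ν = s) (fun ν => W ν = -s)
      rw [filterb] at h2'
      exact h2'
    have h3 : ((Finset.univ.filter fun ν => ¬ W ν = s).filter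
          fun ν => ¬ W ν = -s) = Finset.univ.filter fun ν => W ν = 0 := by
      rw [Finset.filter_filter]
      refine Finset.filter_congr fun ν _ => ?_
      constructor
      · intro h
        rcases htri ν with hh | hh | hh
        · exact hh
        · exact absurd hh h.1
        · exact absurd hh h.2
      · intro h
        constructor
        · rw [h]; exact hsne.symm
        · rw [h]; exact hnsne.symm
    rw [h3] at h2
    have hcard : (Finset.univ : Finset (Fin n → ZMod 2)).card = 2 ^ n := by
      rw [Finset.card_univ]
      simp [Fintype.card_fun]
    omega
  have hab_sum : (a : ℤ) + b = 2 ^ (2 * k) := by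
    have h1 : s ^ 2 * ((a:ℤ) + b) = s ^ 2 * 2 ^ (2 * k) := by
      rw [mul_add, ← key2, hsum2, hs]
      rw [← pow_mul, ← pow_add]
      congr 1
      omega
    exact mul_left_cancel₀ (pow_ne_zero 2 hsne) h1
  have hab_diff : (a : ℤ) - b = 2 ^ k := by
    have h1 : s * ((a:ℤ) - b) = s * 2 ^ k := by
      rw [mul_sub, ← key1, hsum, hs, ← pow_add]
      congr 1
      omega
    exact mul_left_cancel₀ hsne h1
  have hpow1 : (2:ℤ) ^ (2 * k) = 2 * 2 ^ (2 * k - 1) := by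
    rw [← pow_succ']
    congr 1
    omega
  have hpow2 : (2:ℤ) ^ k = 2 * 2 ^ (k - 1) := by
    rw [← pow_succ']
    congr 1
    omega
  have haz : (a : ℤ) = 2 ^ (2*k-1) + 2 ^ (k-1) := by linarith
  have hbz : (b : ℤ) = 2 ^ (2*k-1) - 2 ^ (k-1) := by linarith
  have hle : (2:ℕ) ^ (k-1) ≤ 2 ^ (2*k-1) := Nat.pow_le_pow_right (by norm_num) (by omega)
  have hA : a = 2 ^ (2*k-1) + 2 ^ (k-1) := by exact_mod_cast haz
  have hB : b = 2 ^ (2*k-1) - 2 ^ (k-1) := by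
    have : ((2 ^ (2*k-1) - 2 ^ (k-1) : ℕ) : ℤ) = 2 ^ (2*k-1) - 2 ^ (k-1) := by
      rw [Nat.cast_sub hle]; push_cast; ring
    exact Nat.cast_injective (by rw [hbz, ← this])
  have habn : a + b = 2 ^ (2 * k) := by exact_mod_cast hab_sum
  have hZ : z = 2 ^ (2 * k) := by
    have h2n : (2:ℕ) ^ n = 2 * 2 ^ (2 * k) := by
      rw [hnk, pow_succ]; ring
    omega
  exact ⟨hA, hB, hZ⟩

lemma zmod2_add_one_iff : ∀ a b : ZMod 2, (b = 1 → a = 1) →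
    (a + b = 1 ↔ a = 1 ∧ ¬ b = 1) := by decide

lemma wt_add_of_subset {n : ℕ} (c c' : {x : Fin n → ZMod 2 // x ≠ 0} → ZMod 2)
    (h : ∀ x, c' x = 1 → c x = 1) : wt c = wt c' + wt (c + c') := by
  unfold wt
  have h1 := Finset.card_filter_add_card_filter_not
      (s := Finset.univ.filter fun x => c x = 1) (fun x => c' x = 1)
  rw [Finset.filter_filter, Finset.filter_filter] at h1
  have e1 : (Finset.univ.filter fun x => c x = 1 ∧ c' x = 1)
      = Finset.univ.filter fun x => c' x = 1 :=
    Finset.filter_congr fun x _ => ⟨fun hh => hh.2, fun hh => ⟨h x hh, hh⟩⟩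
  have e2 : (Finset.univ.filter fun x => c x = 1 ∧ ¬ c' x = 1)
      = Finset.univ.filter fun x => (c + c') x = 1 :=
    Finset.filter_congr fun x _ => by
      simp only [Pi.add_apply]
      exact (zmod2_add_one_iff (c x) (c' x) (h x)).symm
  rw [e1, e2] at h1
  omega

lemma cw_zero {n m : ℕ} (F : (Fin n → ZMod 2) → (Fin m → ZMod 2)) :
    cw F 0 0 = 0 := by
  funext x
  simp only [cw, dotp_zero_left, add_zero, Pi.zero_apply]

lemma whtF_zero_left {n m : ℕ} (F : (Fin n → ZMod 2) → (Fin m → ZMod 2))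
    (ν : Fin n → ZMod 2) :
    whtF F 0 ν = if ν = 0 then (2:ℤ) ^ n else 0 := by
  unfold whtF wht
  have : ∀ x : Fin n → ZMod 2, (-1:ℤ) ^ (dotp 0 (F x) + dotp ν x).val
      = chi (dotp x ν) := by
    intro x
    rw [dotp_zero_left, zero_add, dotp_comm]
    rfl
  rw [Finset.sum_congr rfl fun x _ => this x]
  exact sum_chi_dotp ν

lemma wt_zero {n : ℕ} : wt (0 : {x : Fin n → ZMod 2 // x ≠ 0} → ZMod 2) = 0 := by
  unfold wt
  simp

theorem stmt7 (n : ℕ) (hn : 4 < n) (hodd : Odd n)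
    (F : (Fin n → ZMod 2) → (Fin n → ZMod 2)) (h0 : F 0 = 0)
    (hab : ∀ μ : Fin n → ZMod 2, μ ≠ 0 → ∀ ν : Fin n → ZMod 2,
      whtF F μ ν = 0 ∨ whtF F μ ν = 2 ^ ((n + 1) / 2) ∨ whtF F μ ν = -2 ^ ((n + 1) / 2)) :
    IsMinimal (codeF F) ∧
    Nat.card {x : Fin n → ZMod 2 // x ≠ 0} = 2 ^ n - 1 ∧
    Nat.card (codeF F) = 2 ^ (2 * n) ∧
    IsLeast (weights F) (2 ^ (n - 1) - 2 ^ ((n - 1) / 2)) ∧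
    (Finset.univ.filter fun p : (Fin n → ZMod 2) × (Fin n → ZMod 2) =>
        wt (cw F p.1 p.2) = 2 ^ (n - 1)).card
      = (2 ^ n - 1) + (2 ^ n - 1) * 2 ^ (n - 1) ∧
    (Finset.univ.filter fun p : (Fin n → ZMod 2) × (Fin n → ZMod 2) =>
        wt (cw F p.1 p.2) = 2 ^ (n - 1) + 2 ^ ((n - 1) / 2)).card
      = (2 ^ n - 1) * (2 ^ (n - 2) - 2 ^ ((n - 3) / 2)) ∧
    (Finset.univ.filter fun p : (Fin n → ZMod 2) × (Fin n → ZMod 2) =>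
        wt (cw F p.1 p.2) = 2 ^ (n - 1) - 2 ^ ((n - 1) / 2)).card
      = (2 ^ n - 1) * (2 ^ (n - 2) + 2 ^ ((n - 3) / 2)) := by
  obtain ⟨k, hk⟩ := hodd
  have hk2 : 2 ≤ k := by omega
  have e1 : n - 1 = 2 * k := by omega
  have e2 : (n - 1) / 2 = k := by omega
  have e3 : n - 2 = 2 * k - 1 := by omega
  have e4 : (n - 3) / 2 = k - 1 := by omega
  have e5 : (n + 1) / 2 = k + 1 := by omega
  rw [e2, e4, e1, e3]
  rw [e5] at hab
  -- numeric facts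
  have hpowle : (2:ℕ) ^ k ≤ 2 ^ (2 * k) := Nat.pow_le_pow_right (by norm_num) (by omega)
  have hkpos : 0 < (2:ℕ) ^ k := pow_pos (by norm_num) k
  have h4 : 4 * 2 ^ k ≤ (2:ℕ) ^ (2 * k) := by
    have h42 : (4:ℕ) ≤ 2 ^ k := by
      calc (4:ℕ) = 2 ^ 2 := by norm_num
      _ ≤ 2 ^ k := Nat.pow_le_pow_right (by norm_num) hk2
    calc 4 * 2 ^ k ≤ 2 ^ k * 2 ^ k := Nat.mul_le_mul_right _ h42
    _ = 2 ^ (2 * k) := by rw [two_mul, pow_add]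
  have hzn : (2:ℤ) ^ n = 2 * 2 ^ (2 * k) := by
    rw [hk, pow_succ]; ring
  have hzk : (2:ℤ) ^ (k + 1) = 2 * 2 ^ k := by
    rw [pow_succ]; ring
  -- cast identities
  have cast_mid : 2 * (((2:ℕ) ^ (2 * k) : ℕ) : ℤ) = 2 ^ n - 0 := by push_cast; linarith
  have cast_min : 2 * (((2:ℕ) ^ (2 * k) - 2 ^ k : ℕ) : ℤ) = 2 ^ n - 2 ^ (k + 1) := by
    rw [Nat.cast_sub hpowle]; push_cast; linarith
  have cast_max : 2 * (((2:ℕ) ^ (2 * k) + 2 ^ k : ℕ) : ℤ) = 2 ^ n - (-2 ^ (k + 1)) := by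
    push_cast; linarith
  -- weight/walsh conversion
  have wt_iff : ∀ (μ ν : Fin n → ZMod 2) (v : ℤ) (w : ℕ), 2 * (w:ℤ) = 2 ^ n - v →
      (wt (cw F μ ν) = w ↔ whtF F μ ν = v) := by
    intro μ ν v w hw
    have hrel := wt_relation F h0 μ ν
    constructor
    · intro h; rw [h] at hrel; linarith
    · intro h; rw [h] at hrel
      have : (wt (cw F μ ν) : ℤ) = (w : ℤ) := by linarith
      exact_mod_cast this
  have filter_eq : ∀ (μ : Fin n → ZMod 2) (v : ℤ) (w : ℕ), 2 * (w:ℤ) = 2 ^ n - v →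
      (Finset.univ.filter fun ν => wt (cw F μ ν) = w)
        = Finset.univ.filter fun ν => whtF F μ ν = v := by
    intro μ v w hw
    exact Finset.filter_congr fun ν _ => wt_iff μ ν v w hw
  -- weights for μ = 0
  have wt_zero_left : ∀ ν : Fin n → ZMod 2,
      wt (cw F 0 ν) = if ν = 0 then 0 else 2 ^ (2 * k) := by
    intro ν
    by_cases hν : ν = 0
    · rw [if_pos hν, hν]
      rw [cw_zero]
      exact wt_zero
    · rw [if_neg hν]
      refine (wt_iff 0 ν 0 (2 ^ (2 * k)) cast_mid).mpr ?_
      rw [whtF_zero_left, if_neg hν]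
  -- injectivity
  have hinj : Function.Injective
      (fun p : (Fin n → ZMod 2) × (Fin n → ZMod 2) => cw F p.1 p.2) := by
    intro p q h
    simp only at h
    have hzero : cw F (p.1 + q.1) (p.2 + q.2) = 0 := by
      rw [← cw_add, h]
      funext x
      simpa using zmod2_add_self (cw F q.1 q.2 x)
    have hwht := whtF_of_cw_zero F h0 hzero
    have hμ : p.1 + q.1 = 0 := by
      by_contra hμ
      rcases hab _ hμ (p.2 + q.2) with hh | hh | hh
      · rw [hwht] at hh; exact (pow_ne_zero n (by norm_num : (2:ℤ) ≠ 0)) hh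
      · rw [hwht] at hh
        have : (2:ℤ) ^ (k + 1) < 2 ^ n := by
          apply pow_lt_pow_right₀ (by norm_num) (by omega)
        omega
      · rw [hwht] at hh
        have h1 : (0:ℤ) < 2 ^ n := by positivity
        have h2 : (0:ℤ) < 2 ^ (k + 1) := by positivity
        omega
    have hν : p.2 + q.2 = 0 := by
      apply dotp_eq_zero_forall (x := p.2 + q.2)
      intro ν
      rw [dotp_comm]
      by_cases hx : ν = 0
      · rw [hx, dotp_comm, dotp_zero_left]
      · have := congrFun hzero ⟨ν, hx⟩
        unfold cw at this
        rw [hμ] at this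
        rw [dotp_zero_left, zero_add] at this
        exact this
    have h1 : p.1 = q.1 := by
      funext i
      exact (zmod2_add_eq_zero (p.1 i) (q.1 i) (by simpa using congrFun hμ i)).symm
    have h2 : p.2 = q.2 := by
      funext i
      exact (zmod2_add_eq_zero (p.2 i) (q.2 i) (by simpa using congrFun hν i)).symm
    exact Prod.ext h1 h2
  -- bounds for nonzero codewords
  have bounds : ∀ μ ν : Fin n → ZMod 2, cw F μ ν ≠ 0 →
      2 ^ (2 * k) - 2 ^ k ≤ wt (cw F μ ν) ∧ wt (cw F μ ν) ≤ 2 ^ (2 * k) + 2 ^ k := by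
    intro μ ν hc
    by_cases hμ : μ = 0
    · subst hμ
      have hν : ν ≠ 0 := by
        intro h; subst h; exact hc (cw_zero F)
      have hw := wt_zero_left ν
      simp only [hν, if_false] at hw
      rw [hw]
      omega
    · rcases hab μ hμ ν with h | h | h
      · rw [(wt_iff μ ν 0 (2 ^ (2 * k)) cast_mid).mpr h]; omega
      · rw [(wt_iff μ ν (2 ^ (k+1)) (2 ^ (2 * k) - 2 ^ k) cast_min).mpr h]; omega
      · rw [(wt_iff μ ν (-2 ^ (k+1)) (2 ^ (2 * k) + 2 ^ k) cast_max).mpr h]; omega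
  have card_fun : Fintype.card (Fin n → ZMod 2) = 2 ^ n := by
    simp [Fintype.card_fun]
  -- counting infrastructure
  have card_split : ∀ w : ℕ,
      (Finset.univ.filter fun p : (Fin n → ZMod 2) × (Fin n → ZMod 2) =>
          wt (cw F p.1 p.2) = w).card
        = ∑ μ : Fin n → ZMod 2,
            (Finset.univ.filter fun ν => wt (cw F μ ν) = w).card := by
    intro w
    rw [Finset.card_filter, Fintype.sum_prod_type]
    exact Finset.sum_congr rfl fun μ _ => (Finset.card_filter _ _).symm
  have herase : (Finset.univ.erase (0 : Fin n → ZMod 2)).card = 2 ^ n - 1 := by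
    rw [Finset.card_erase_of_mem (Finset.mem_univ _), Finset.card_univ, card_fun]
  have sum_split : ∀ f : (Fin n → ZMod 2) → ℕ,
      ∑ μ : Fin n → ZMod 2, f μ
        = f 0 + ∑ μ ∈ Finset.univ.erase 0, f μ :=
    fun f => (Finset.add_sum_erase Finset.univ f (Finset.mem_univ 0)).symm
  -- distinctness of weights
  have hne1 : (2:ℕ) ^ (2 * k) - 2 ^ k ≠ 0 := by omega
  have hne2 : (2:ℕ) ^ (2 * k) + 2 ^ k ≠ 0 := by omega
  -- inner counts for μ = 0
  have inner0_mid : (Finset.univ.filter fun ν => wt (cw F 0 ν) = 2 ^ (2 * k))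
      = Finset.univ.erase 0 := by
    ext ν
    simp only [Finset.mem_filter, Finset.mem_univ, true_and, Finset.mem_erase, and_true]
    rw [wt_zero_left ν]
    by_cases hν : ν = 0
    · subst hν
      rw [if_pos rfl]
      constructor
      · intro h
        exact absurd h.symm (by omega)
      · intro h
        exact absurd rfl h
    · rw [if_neg hν]
      exact ⟨fun _ => hν, fun _ => rfl⟩
  have inner0_other : ∀ w : ℕ, w ≠ 0 → w ≠ 2 ^ (2 * k) →
      (Finset.univ.filter fun ν => wt (cw F 0 ν) = w) = ∅ := by
    intro w hw0 hwm
    rw [Finset.filter_eq_empty_iff]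
    intro ν _
    rw [wt_zero_left ν]
    by_cases hν : ν = 0
    · rw [if_pos hν]; exact fun h => hw0 h.symm
    · rw [if_neg hν]; exact fun h => hwm h.symm
  -- counts for μ ≠ 0
  have countsμ : ∀ μ : Fin n → ZMod 2, μ ≠ 0 →
      (Finset.univ.filter fun ν => wt (cw F μ ν) = 2 ^ (2 * k)).card = 2 ^ (2 * k) ∧
      (Finset.univ.filter fun ν => wt (cw F μ ν) = 2 ^ (2 * k) - 2 ^ k).card
          = 2 ^ (2 * k - 1) + 2 ^ (k - 1) ∧
      (Finset.univ.filter fun ν => wt (cw F μ ν) = 2 ^ (2 * k) + 2 ^ k).card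
          = 2 ^ (2 * k - 1) - 2 ^ (k - 1) := by
    intro μ hμ
    obtain ⟨hA, hB, hZ⟩ := counts hk hk2 F h0 μ (hab μ hμ)
    refine ⟨?_, ?_, ?_⟩
    · rw [filter_eq μ 0 _ cast_mid]; exact hZ
    · rw [filter_eq μ (2 ^ (k+1)) _ cast_min]; exact hA
    · rw [filter_eq μ (-2 ^ (k+1)) _ cast_max]
      exact hB
  refine ⟨?_, ?_, ?_, ?_, ?_, ?_, ?_⟩
  · -- IsMinimal
    rintro c ⟨⟨μ, ν⟩, rfl⟩ c' ⟨⟨μ', ν'⟩, rfl⟩ hcne hc'ne hsub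
    simp only at hcne hc'ne hsub ⊢
    by_contra hne
    have hadd : cw F μ ν + cw F μ' ν' = cw F (μ + μ') (ν + ν') := cw_add F μ μ' ν ν'
    have haddne : cw F (μ + μ') (ν + ν') ≠ 0 := by
      intro h
      apply hne
      rw [← hadd] at h
      funext x
      exact zmod2_add_eq_zero _ _ (congrFun h x)
    have hwt := wt_add_of_subset (cw F μ ν) (cw F μ' ν')
      (fun x hx => hsub (show x ∈ {x | cw F μ' ν' x = 1} from hx))
    rw [hadd] at hwt
    have b1 := bounds μ ν hcne
    have b2 := bounds μ' ν' hc'ne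
    have b3 := bounds (μ + μ') (ν + ν') haddne
    omega
  · -- Nat.card of punctured space
    rw [Nat.card_eq_fintype_card]
    rw [Fintype.card_subtype_compl, card_fun, Fintype.card_subtype_eq]
  · -- Nat.card of code
    have : Nat.card (codeF F) = Nat.card ((Fin n → ZMod 2) × (Fin n → ZMod 2)) :=
      Nat.card_range_of_injective hinj
    rw [this, Nat.card_eq_fintype_card, Fintype.card_prod, card_fun, two_mul, pow_add]
  · -- IsLeast
    constructor
    · obtain ⟨μ0, hμ0⟩ : ∃ μ0 : Fin n → ZMod 2, μ0 ≠ 0 := by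
        refine ⟨fun _ => 1, fun h => ?_⟩
        have := congrFun h ⟨0, by omega⟩
        exact one_ne_zero this
      have hcard := (countsμ μ0 hμ0).2.1
      have hpos : 0 < (Finset.univ.filter fun ν =>
          wt (cw F μ0 ν) = 2 ^ (2 * k) - 2 ^ k).card := by
        rw [hcard]; positivity
      obtain ⟨ν, hν⟩ := Finset.card_pos.mp hpos
      have hwt : wt (cw F μ0 ν) = 2 ^ (2 * k) - 2 ^ k :=
        (Finset.mem_filter.mp hν).2
      refine ⟨cw F μ0 ν, ⟨(μ0, ν), rfl⟩, ?_, hwt⟩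
      intro h
      rw [h, wt_zero] at hwt
      omega
    · rintro w ⟨c, ⟨⟨μ, ν⟩, rfl⟩, hcne, rfl⟩
      exact (bounds μ ν hcne).1
  · -- count wt = 2^(2k)
    rw [card_split, sum_split]
    rw [inner0_mid, herase]
    rw [Finset.sum_congr rfl fun μ hμ => (countsμ μ (Finset.ne_of_mem_erase hμ)).1]
    rw [Finset.sum_const, herase, smul_eq_mul]
  · -- count wt = 2^(2k) + 2^k
    rw [card_split, sum_split]
    rw [inner0_other _ hne2 (by omega), Finset.card_empty]
    rw [Finset.sum_congr rfl fun μ hμ => (countsμ μ (Finset.ne_of_mem_erase hμ)).2.2]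
    rw [Finset.sum_const, herase, smul_eq_mul, zero_add]
  · -- count wt = 2^(2k) - 2^k
    rw [card_split, sum_split]
    rw [inner0_other _ hne1 (by omega), Finset.card_empty]
    rw [Finset.sum_congr rfl fun μ hμ => (countsμ μ (Finset.ne_of_mem_erase hμ)).2.1]
    rw [Finset.sum_const, herase, smul_eq_mul, zero_add]
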